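/- arXiv:1706.06949 — 2 statements merged into one kernel-verified Lean document; each statement's English description precedes it below -/
import Mathlib

section
/- Let κ > 0. For every R > 0 there exists a constant C > 0 such that for all r, r' ∈ ℝ² with ‖r'‖ ≤ R and ‖r‖ ≥ 2R one has | exp(iκ‖r − r'‖) − exp(iκ‖r‖)·exp(−iκ⟨r̂, r'⟩) | ≤ C/‖r‖, where r̂ = r/‖r‖. That is, the phase factor of an outgoing wave centered at r' satisfies exp(iκ‖r − r'‖) = exp(iκ(‖r‖ − r̂·r'))(1 + O(‖r‖⁻¹)) uniformly for r' in a bounded set. -/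
/-!
Write `a = ‖r - r'‖` and `b = ‖r‖ - ⟪r̂, r'⟫`. Then `a² - b² = ‖r'‖² - ⟪r̂, r'⟫² ∈ [0, ‖r'‖²]`,
while `a, b ≥ ‖r‖ - ‖r'‖`, so `a + b ≥ ‖r‖` once `‖r‖ ≥ 2‖r'‖`. Hence `|a - b| ≤ ‖r'‖² / ‖r‖`,
and since `x ↦ exp(iκx)` is `κ`-Lipschitz the phase factors differ by at most `κ R² / ‖r‖`.
-/

open Complex RealInnerProductSpace

theorem Complex.norm_exp_I_mul_ofReal_sub_exp_I_mul_ofReal_le (x y : ℝ) :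
    ‖exp (I * x) - exp (I * y)‖ ≤ |x - y| := by
  have hfactor : exp (I * x) - exp (I * y) = exp (I * y) * (exp (I * ↑(x - y)) - 1) := by
    rw [mul_sub, mul_one, ← exp_add]
    push_cast
    ring_nf
  rw [hfactor, norm_mul, norm_exp_I_mul_ofReal, one_mul, ← Real.norm_eq_abs]
  exact Real.norm_exp_I_mul_ofReal_sub_one_le

section FarField

variable {E : Type*} [NormedAddCommGroup E] [InnerProductSpace ℝ E]

theorem abs_inner_normalize_le_norm (r r' : E) : |⟪‖r‖⁻¹ • r, r'⟫| ≤ ‖r'‖ := by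
  rw [real_inner_smul_left, abs_mul, abs_inv, abs_norm]
  rcases (norm_nonneg r).eq_or_lt with hr | hr
  · simp [← hr]
  · rw [inv_mul_le_iff₀ hr]
    exact abs_real_inner_le_norm r r'

theorem norm_sub_sq_sub_far_field_sq {r : E} (hr : r ≠ 0) (r' : E) :
    ‖r - r'‖ ^ 2 - (‖r‖ - ⟪‖r‖⁻¹ • r, r'⟫) ^ 2 = ‖r'‖ ^ 2 - ⟪‖r‖⁻¹ • r, r'⟫ ^ 2 := by
  have hr : ‖r‖ ≠ 0 := norm_ne_zero_iff.mpr hr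
  rw [norm_sub_sq_real, real_inner_smul_left]
  field_simp
  ring

theorem abs_norm_sub_sub_far_field_le {r r' : E} (h : 2 * ‖r'‖ ≤ ‖r‖) :
    |‖r - r'‖ - (‖r‖ - ⟪‖r‖⁻¹ • r, r'⟫)| ≤ ‖r'‖ ^ 2 / ‖r‖ := by
  rcases eq_or_ne r 0 with rfl | hr
  · have : r' = 0 := norm_le_zero_iff.mp (by linarith [norm_zero (E := E)])
    simp [this]
  have hsq := norm_sub_sq_sub_far_field_sq hr r'
  have ht := abs_inner_normalize_le_norm r r'
  set t := ⟪‖r‖⁻¹ • r, r'⟫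
  have hsum : ‖r‖ ≤ ‖r - r'‖ + (‖r‖ - t) := by
    linarith [norm_sub_norm_le r r', (abs_le.mp ht).2]
  have hpos : 0 < ‖r‖ := norm_pos_iff.mpr hr
  have ht2 : t ^ 2 ≤ ‖r'‖ ^ 2 := sq_le_sq' (abs_le.mp ht).1 (abs_le.mp ht).2
  have hnonneg : 0 ≤ ‖r - r'‖ - (‖r‖ - t) := by nlinarith
  rw [abs_of_nonneg hnonneg, le_div_iff₀ hpos]
  nlinarith

end FarField

/-- Let `κ > 0`. For every `R > 0` there is `C > 0` such that for all
`r, r' ∈ ℝ²` with `‖r'‖ ≤ R` and `‖r‖ ≥ 2R`,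
`|exp(iκ‖r − r'‖) − exp(iκ‖r‖)·exp(−iκ⟨r̂, r'⟩)| ≤ C/‖r‖`, where `r̂ = r/‖r‖`. -/
theorem phase_factor_asymptotic_expansion (κ : ℝ) (hκ : 0 < κ) :
    ∀ R : ℝ, 0 < R → ∃ C : ℝ, 0 < C ∧
      ∀ r r' : EuclideanSpace ℝ (Fin 2), ‖r'‖ ≤ R → 2 * R ≤ ‖r‖ →
        ‖Complex.exp (Complex.I * κ * (‖r - r'‖ : ℝ))
          - Complex.exp (Complex.I * κ * (‖r‖ : ℝ))
            * Complex.exp (-(Complex.I * κ * ((inner ℝ ((‖r‖)⁻¹ • r) r' : ℝ) : ℂ)))‖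
          ≤ C / ‖r‖ := by
  intro R hR
  refine ⟨κ * R ^ 2, by positivity, fun r r' hr' hr => ?_⟩
  set t := ⟪‖r‖⁻¹ • r, r'⟫
  have hphase : exp (I * κ * ‖r‖) * exp (-(I * κ * t)) = exp (I * ↑(κ * (‖r‖ - t))) := by
    rw [← exp_add]
    push_cast
    ring_nf
  have hdist := abs_norm_sub_sub_far_field_le (r := r) (r' := r') (by linarith)
  rw [hphase, show I * κ * ‖r - r'‖ = I * ↑(κ * ‖r - r'‖) by push_cast; ring]
  calc _ ≤ |κ * ‖r - r'‖ - κ * (‖r‖ - t)| := norm_exp_I_mul_ofReal_sub_exp_I_mul_ofReal_le _ _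
    _ = κ * |‖r - r'‖ - (‖r‖ - t)| := by rw [← mul_sub, abs_mul, abs_of_pos hκ]
    _ ≤ κ * (R ^ 2 / ‖r‖) := by
        gcongr
        exact hdist.trans (by gcongr)
    _ = κ * R ^ 2 / ‖r‖ := mul_div_assoc' _ _ _
end

section
/- Let κ > 0, let K ⊂ ℝ² be a bounded set, let μ be a finite (nonnegative) measure on ℝ² supported in K, and let h : ℝ² → ℂ be a bounded measurable function. Define ψ(r) = ∫ h(r')·exp(iκ‖r − r'‖)/‖r − r'‖^{1/2} dμ(r') for r outside a ball containing K, and define ψ_∞(r̂) = ∫ h(r')·exp(−iκ⟨r̂, r'⟩) dμ(r') for unit vectors r̂. Then there exist constants C > 0 and R₀ > 0 such that for all r ∈ ℝ² with ‖r‖ ≥ R₀, | ‖r‖^{1/2}·exp(−iκ‖r‖)·ψ(r) − ψ_∞(r/‖r‖) | ≤ C/‖r‖; i.e., ψ(r) = (exp(iκ‖r‖)/‖r‖^{1/2})(ψ_∞(r̂) + O(‖r‖⁻¹)) as ‖r‖ → ∞, uniformly in all directions r̂ = r/‖r‖. -/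
/-!
Write `N = ‖r‖`, `D = ‖r - r'‖` and `p = ⟪r̂, r'⟫`. For `‖r'‖ ≤ M ≤ N / 2` the normalised kernel
`N^{1/2} e^{-iκN} e^{iκD} / D^{1/2}` is within `O(1/N)` of the plane wave `e^{-iκp}`: the amplitude
`√(N / D)` is within `2M / N` of `1` because `|N - D| ≤ M`, and the phase error
`D - (N - p) = (‖r'‖² - p²) / (D + N - p)` is at most `M² / N` because `D + N - p ≥ N`.
As `h` is bounded and `μ` finite, integrating this uniform pointwise bound against `h dμ` gives the
claim.
-/

open MeasureTheory

lemma norm_exp_I_mul_ofReal_sub_exp_I_mul_ofReal_le (a b : ℝ) :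
    ‖Complex.exp (Complex.I * a) - Complex.exp (Complex.I * b)‖ ≤ |a - b| := by
  have hfactor : Complex.exp (Complex.I * a) - Complex.exp (Complex.I * b)
      = Complex.exp (Complex.I * b) * (Complex.exp (Complex.I * ↑(a - b)) - 1) := by
    rw [mul_sub, ← Complex.exp_add]; push_cast; ring_nf
  rw [hfactor, norm_mul, Complex.norm_exp_I_mul_ofReal, one_mul, ← Real.norm_eq_abs]
  exact Real.norm_exp_I_mul_ofReal_sub_one_le

lemma norm_ofReal_mul_exp_I_mul_sub_exp_I_mul_le (q a b : ℝ) :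
    ‖(q : ℂ) * Complex.exp (Complex.I * a) - Complex.exp (Complex.I * b)‖ ≤ |q - 1| + |a - b| := by
  have hsplit : (q : ℂ) * Complex.exp (Complex.I * a) - Complex.exp (Complex.I * b)
      = ((q - 1 : ℝ) : ℂ) * Complex.exp (Complex.I * a)
        + (Complex.exp (Complex.I * a) - Complex.exp (Complex.I * b)) := by push_cast; ring
  calc _ ≤ ‖((q - 1 : ℝ) : ℂ) * Complex.exp (Complex.I * a)‖
          + ‖Complex.exp (Complex.I * a) - Complex.exp (Complex.I * b)‖ :=
        hsplit ▸ norm_add_le _ _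
    _ ≤ |q - 1| + |a - b| := by
        rw [norm_mul, Complex.norm_exp_I_mul_ofReal, mul_one, Complex.norm_real, Real.norm_eq_abs]
        gcongr
        exact norm_exp_I_mul_ofReal_sub_exp_I_mul_ofReal_le a b

lemma abs_sqrt_div_sqrt_sub_one_le {x y : ℝ} (hx : 0 ≤ x) (hy : 0 < y) :
    |√x / √y - 1| ≤ |x - y| / y := by
  set q := √x / √y
  have hq : 0 ≤ q := by positivity
  have hq_sq : q ^ 2 = x / y := by rw [div_pow, Real.sq_sqrt hx, Real.sq_sqrt hy.le]
  calc |q - 1| ≤ |q - 1| * (q + 1) := le_mul_of_one_le_right (abs_nonneg _) (by linarith)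
    _ = |q ^ 2 - 1| := by rw [← abs_of_nonneg (by linarith : 0 ≤ q + 1), ← abs_mul]; ring_nf
    _ = |x - y| / y := by rw [hq_sq, div_sub_one hy.ne', abs_div, abs_of_pos hy]

section FarField

variable {E : Type*} [NormedAddCommGroup E] [InnerProductSpace ℝ E]

lemma abs_inner_inv_norm_smul_le (r r' : E) : |inner ℝ (‖r‖⁻¹ • r) r'| ≤ ‖r'‖ := by
  rcases eq_or_ne r 0 with rfl | hr
  · simp
  · simpa [norm_smul, hr] using abs_real_inner_le_norm (‖r‖⁻¹ • r) r'

lemma abs_norm_sub_sub_norm_sub_inner_le {r r' : E} (hr : r ≠ 0) (hr' : 2 * ‖r'‖ ≤ ‖r‖) :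
    |‖r - r'‖ - (‖r‖ - inner ℝ (‖r‖⁻¹ • r) r')| ≤ ‖r'‖ ^ 2 / ‖r‖ := by
  set N := ‖r‖
  set D := ‖r - r'‖
  set p := inner ℝ (‖r‖⁻¹ • r) r' with hp_def
  have hN : 0 < N := norm_pos_iff.2 hr
  have hp : |p| ≤ ‖r'‖ := abs_inner_inv_norm_smul_le r r'
  have hD : N - ‖r'‖ ≤ D := by simpa using norm_sub_norm_le r r'
  have hNp : N * p = inner ℝ r r' := by
    rw [hp_def, real_inner_smul_left, ← mul_assoc, mul_inv_cancel₀ hN.ne', one_mul]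
  have hD_sq : D ^ 2 = N ^ 2 - 2 * (N * p) + ‖r'‖ ^ 2 := by rw [norm_sub_sq_real, hNp]
  have hsum : N ≤ D + (N - p) := by linarith [(abs_le.1 hp).2]
  have hprod : |D - (N - p)| * (D + (N - p)) ≤ ‖r'‖ ^ 2 := by
    rw [← abs_of_nonneg (by linarith : 0 ≤ D + (N - p)), ← abs_mul,
      show (D - (N - p)) * (D + (N - p)) = ‖r'‖ ^ 2 - p ^ 2 by linear_combination hD_sq]
    rw [abs_le]; constructor <;> nlinarith [sq_abs p, abs_nonneg p]
  rw [le_div_iff₀ hN]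
  nlinarith [abs_nonneg (D - (N - p))]

lemma norm_outgoing_wave_normalized_sub_plane_wave_le (κ : ℝ) {r r' : E} (hr : r ≠ 0)
    (hr' : 2 * ‖r'‖ ≤ ‖r‖) :
    ‖(√‖r‖ : ℂ) * Complex.exp (-(Complex.I * κ * ‖r‖))
        * (Complex.exp (Complex.I * κ * ‖r - r'‖) / (√‖r - r'‖ : ℂ))
      - Complex.exp (-(Complex.I * κ * inner ℝ (‖r‖⁻¹ • r) r'))‖
      ≤ (2 * ‖r'‖ + |κ| * ‖r'‖ ^ 2) / ‖r‖ := by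
  set N := ‖r‖
  set D := ‖r - r'‖
  set p := inner ℝ (‖r‖⁻¹ • r) r'
  have hN : 0 < N := norm_pos_iff.2 hr
  have hND : |N - D| ≤ ‖r'‖ := by simpa using abs_norm_sub_norm_le r (r - r')
  have hD : N / 2 ≤ D := by linarith [(abs_le.1 hND).2]
  have hamplitude : |√N / √D - 1| ≤ 2 * ‖r'‖ / N :=
    calc |√N / √D - 1| ≤ |N - D| / D := abs_sqrt_div_sqrt_sub_one_le hN.le (by linarith)
      _ ≤ ‖r'‖ / (N / 2) := by gcongr
      _ = 2 * ‖r'‖ / N := by field_simp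
  have hphase : |κ * (D - N) - -(κ * p)| ≤ |κ| * ‖r'‖ ^ 2 / N := by
    rw [show κ * (D - N) - -(κ * p) = κ * (D - (N - p)) by ring, abs_mul, mul_div_assoc]
    gcongr
    exact abs_norm_sub_sub_norm_sub_inner_le hr hr'
  have hrewrite : (√N : ℂ) * Complex.exp (-(Complex.I * κ * N))
        * (Complex.exp (Complex.I * κ * D) / (√D : ℂ))
      - Complex.exp (-(Complex.I * κ * p))
      = ((√N / √D : ℝ) : ℂ) * Complex.exp (Complex.I * ↑(κ * (D - N)))
        - Complex.exp (Complex.I * ↑(-(κ * p))) := by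
    rw [show Complex.I * ↑(κ * (D - N)) = -(Complex.I * κ * N) + Complex.I * κ * D by
      push_cast; ring, Complex.exp_add]
    push_cast; ring_nf
  rw [hrewrite, add_div]
  exact (norm_ofReal_mul_exp_I_mul_sub_exp_I_mul_le _ _ _).trans (add_le_add hamplitude hphase)

end FarField

lemma norm_integral_sub_integral_le_of_ae_norm_sub_le {α G : Type*} [MeasurableSpace α]
    [NormedAddCommGroup G] [NormedSpace ℝ G] {μ : Measure α} [IsFiniteMeasure μ] {f g : α → G}
    {c : ℝ} (hf : AEStronglyMeasurable f μ) (hg : Integrable g μ)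
    (hfg : ∀ᵐ x ∂μ, ‖f x - g x‖ ≤ c) :
    ‖∫ x, f x ∂μ - ∫ x, g x ∂μ‖ ≤ c * μ.real Set.univ := by
  have hfg_int : Integrable (f - g) μ := .of_bound (hf.sub hg.aestronglyMeasurable) c hfg
  have hf_int : Integrable f μ := by simpa using hfg_int.add hg
  rw [← integral_sub hf_int hg]
  exact norm_integral_le_of_norm_le_const hfg

theorem far_field_pattern_of_continuous_superposition_general
    (κ : ℝ)
    (K : Set (EuclideanSpace ℝ (Fin 2))) (hK : Bornology.IsBounded K)
    (μ : Measure (EuclideanSpace ℝ (Fin 2))) [IsFiniteMeasure μ]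
    (hμK : μ Kᶜ = 0)
    (h : EuclideanSpace ℝ (Fin 2) → ℂ) (hmeas : Measurable h)
    (B : ℝ) (hbd : ∀ x, ‖h x‖ ≤ B)
    (ψ : EuclideanSpace ℝ (Fin 2) → ℂ)
    (hψ : ∀ r : EuclideanSpace ℝ (Fin 2),
      ψ r = ∫ r', h r' * Complex.exp (Complex.I * κ * (‖r - r'‖ : ℝ))
          / ((‖r - r'‖ ^ ((1:ℝ)/2) : ℝ) : ℂ) ∂μ)
    (ψinf : EuclideanSpace ℝ (Fin 2) → ℂ)
    (hψinf : ∀ x : EuclideanSpace ℝ (Fin 2),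
      ψinf x = ∫ r', h r' * Complex.exp (-(Complex.I * κ * ((inner ℝ x r' : ℝ) : ℂ))) ∂μ) :
    ∃ C : ℝ, 0 < C ∧ ∃ R₀ : ℝ, 0 < R₀ ∧
      ∀ r : EuclideanSpace ℝ (Fin 2), R₀ ≤ ‖r‖ →
        ‖((‖r‖ ^ ((1:ℝ)/2) : ℝ) : ℂ) * Complex.exp (-(Complex.I * κ * (‖r‖ : ℝ))) * ψ r
          - ψinf ((‖r‖)⁻¹ • r)‖ ≤ C / ‖r‖ := by
  obtain ⟨M, hM, hKM⟩ := hK.exists_pos_norm_le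
  have hμM : ∀ᵐ r' ∂μ, ‖r'‖ ≤ M :=
    measure_mono_null (fun r' hr' hr'K => hr' (hKM r' hr'K)) hμK
  have hB : 0 ≤ B := (norm_nonneg _).trans (hbd 0)
  set c := B * (2 * M + |κ| * M ^ 2) with hc
  refine ⟨c * μ.real Set.univ + 1, by positivity, 2 * M, by positivity, fun r hr => ?_⟩
  have hr0 : r ≠ 0 := norm_pos_iff.1 (by linarith)
  have hplane : Integrable
      (fun r' => h r' * Complex.exp (-(Complex.I * κ * inner ℝ (‖r‖⁻¹ • r) r'))) μ :=
    .of_bound (by fun_prop) B (ae_of_all _ fun r' => by simpa [Complex.norm_exp] using hbd r')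
  simp only [hψ, hψinf, ← Real.sqrt_eq_rpow, ← integral_const_mul]
  calc _ ≤ c / ‖r‖ * μ.real Set.univ :=
        norm_integral_sub_integral_le_of_ae_norm_sub_le
          (Measurable.aestronglyMeasurable (by fun_prop)) hplane ?_
    _ ≤ (c * μ.real Set.univ + 1) / ‖r‖ := by rw [div_mul_eq_mul_div]; gcongr; linarith
  filter_upwards [hμM] with r' hr'
  rw [mul_div_assoc, mul_left_comm, ← mul_sub, norm_mul]
  calc _ ≤ B * ((2 * ‖r'‖ + |κ| * ‖r'‖ ^ 2) / ‖r‖) :=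
        mul_le_mul (hbd r') (norm_outgoing_wave_normalized_sub_plane_wave_le κ hr0 (by linarith))
          (norm_nonneg _) hB
    _ ≤ c / ‖r‖ := by rw [← mul_div_assoc, hc]; gcongr

/-- For a continuous superposition
`ψ(r) = ∫ h(r') exp(iκ‖r − r'‖)/‖r − r'‖^{1/2} dμ(r')` of outgoing point-source waves,
where `μ` is a finite measure supported in a bounded set `K` and `h` is bounded and
measurable, the far-field pattern `ψ_∞(r̂) = ∫ h(r') exp(−iκ⟨r̂, r'⟩) dμ(r')` satisfies:
there exist `C > 0` and `R₀ > 0` such that for all `‖r‖ ≥ R₀`,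
`|‖r‖^{1/2} e^{−iκ‖r‖} ψ(r) − ψ_∞(r/‖r‖)| ≤ C/‖r‖`. -/
theorem far_field_pattern_of_continuous_superposition
    (κ : ℝ) (hκ : 0 < κ)
    (K : Set (EuclideanSpace ℝ (Fin 2))) (hK : Bornology.IsBounded K)
    (μ : Measure (EuclideanSpace ℝ (Fin 2))) [IsFiniteMeasure μ]
    (hμK : μ Kᶜ = 0)
    (h : EuclideanSpace ℝ (Fin 2) → ℂ) (hmeas : Measurable h)
    (B : ℝ) (hbd : ∀ x, ‖h x‖ ≤ B)
    (ψ : EuclideanSpace ℝ (Fin 2) → ℂ)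
    (hψ : ∀ r : EuclideanSpace ℝ (Fin 2),
      ψ r = ∫ r', h r' * Complex.exp (Complex.I * κ * (‖r - r'‖ : ℝ))
          / ((‖r - r'‖ ^ ((1:ℝ)/2) : ℝ) : ℂ) ∂μ)
    (ψinf : EuclideanSpace ℝ (Fin 2) → ℂ)
    (hψinf : ∀ x : EuclideanSpace ℝ (Fin 2),
      ψinf x = ∫ r', h r' * Complex.exp (-(Complex.I * κ * ((inner ℝ x r' : ℝ) : ℂ))) ∂μ) :
    ∃ C : ℝ, 0 < C ∧ ∃ R₀ : ℝ, 0 < R₀ ∧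
      ∀ r : EuclideanSpace ℝ (Fin 2), R₀ ≤ ‖r‖ →
        ‖((‖r‖ ^ ((1:ℝ)/2) : ℝ) : ℂ) * Complex.exp (-(Complex.I * κ * (‖r‖ : ℝ))) * ψ r
          - ψinf ((‖r‖)⁻¹ • r)‖ ≤ C / ‖r‖ :=
  far_field_pattern_of_continuous_superposition_general κ K hK μ hμK h hmeas B hbd ψ hψ ψinf hψinf
end
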